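/- Let p be a prime, K a finite extension of ℚ_p of degree d, α ∈ K with α ∉ O_K, and let β be a Galois conjugate of α (so f(α⁻¹) = f(β⁻¹) = 0 for the common characteristic polynomial f of α⁻¹). Let b_1, b_2 ∈ ℤ_p and, for ℓ ≥ 0, let M_ℓ be the ℤ_p-submodule of K spanned by b_1 α^{ℓ+1} + b_2 β^{ℓ+1}, …, b_1 α^{ℓ+d} + b_2 β^{ℓ+d}. Then b_1 α^ℓ + b_2 β^ℓ ∈ p·M_ℓ for every integer ℓ ≥ 0. -/

import Mathlib

/-! The spectral norm `|·|` of `K` over `ℚ_p` is multiplicative and equals the spectral value of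
the minimal polynomial, so `|x| ≤ 1` makes the minimal polynomial of `x` `ℤ_p`-integral. Hence
`α ∉ O_K` forces `|α⁻¹| < 1`, and each non-leading coefficient `a_i` of the minimal polynomial
of `α⁻¹` then has `‖a_i‖ ≤ |α⁻¹| ^ (n - i) < 1`, i.e. `a_i ∈ pℤ_p`. Multiplying
`f(α⁻¹) = f(β⁻¹) = 0` by `α^(ℓ+n)` and `β^(ℓ+n)` writes `b₁ α^ℓ + b₂ β^ℓ` as a
`pℤ_p`-combination of the generators of `M ℓ`. -/

open Polynomial

theorem norm_coeff_lt_one_of_spectralValue_lt_one {R : Type*} [SeminormedRing R] {P : R[X]}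
    (hP : spectralValue P < 1) {n : ℕ} (hn : n < P.natDegree) : ‖P.coeff n‖ < 1 := by
  have hterm : spectralValueTerms P n ≤ spectralValue P :=
    le_ciSup (spectralValueTerms_bddAbove P) n
  rw [spectralValueTerms_of_lt_natDegree P hn] at hterm
  by_contra! h
  have hn' : (n : ℝ) < P.natDegree := by exact_mod_cast hn
  have : 1 ≤ ‖P.coeff n‖ ^ (1 / (P.natDegree - n : ℝ)) :=
    Real.one_le_rpow h (by rw [one_div_nonneg, sub_nonneg]; exact hn'.le)
  linarith

namespace PadicInt

variable {p : ℕ} [Fact p.Prime]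

theorem exists_monic_map_eq {P : ℚ_[p][X]} (hP : P.Monic) (h : ∀ n, ‖P.coeff n‖ ≤ 1) :
    ∃ Q : ℤ_[p][X], Q.map (algebraMap ℤ_[p] ℚ_[p]) = P ∧ Q.Monic := by
  have hlifts : P ∈ lifts (algebraMap ℤ_[p] ℚ_[p]) :=
    (lifts_iff_coeff_lifts P).2 fun n => ⟨⟨P.coeff n, h n⟩, rfl⟩
  obtain ⟨Q, hQ, -, hQm⟩ := lifts_and_natDegree_eq_and_monic hlifts hP
  exact ⟨Q, hQ, hQm⟩

end PadicInt

section

variable {p : ℕ} [Fact p.Prime] {K : Type*} [Field K] [Algebra ℚ_[p] K]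
  [Algebra.IsAlgebraic ℚ_[p] K]

theorem exists_monic_map_eq_minpoly_of_spectralNorm_le_one {x : K}
    (hx : spectralNorm ℚ_[p] K x ≤ 1) :
    ∃ Q : ℤ_[p][X], Q.map (algebraMap ℤ_[p] ℚ_[p]) = minpoly ℚ_[p] x ∧ Q.Monic :=
  PadicInt.exists_monic_map_eq (minpoly.monic (Algebra.IsIntegral.isIntegral x))
    ((spectralValue_le_one_iff (minpoly.monic (Algebra.IsIntegral.isIntegral x))).1 hx)

variable [Algebra ℤ_[p] K] [IsScalarTower ℤ_[p] ℚ_[p] K]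

theorem isIntegral_of_spectralNorm_le_one {x : K} (hx : spectralNorm ℚ_[p] K x ≤ 1) :
    IsIntegral ℤ_[p] x := by
  obtain ⟨Q, hQ, hQm⟩ := exists_monic_map_eq_minpoly_of_spectralNorm_le_one hx
  exact ⟨Q, hQm, by rw [← aeval_def, ← aeval_map_algebraMap ℚ_[p], hQ, minpoly.aeval]⟩

theorem spectralNorm_inv_lt_one_of_not_isIntegral {x : K} (hx : ¬ IsIntegral ℤ_[p] x) :
    spectralNorm ℚ_[p] K x⁻¹ < 1 := by
  have hx0 : x ≠ 0 := by rintro rfl; exact hx isIntegral_zero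
  have hlt : 1 < spectralNorm ℚ_[p] K x := by
    by_contra! h; exact hx (isIntegral_of_spectralNorm_le_one h)
  have hmul : spectralNorm ℚ_[p] K x⁻¹ * spectralNorm ℚ_[p] K x = 1 := by
    rw [← spectralMulAlgNorm_def, ← spectralMulAlgNorm_def, ← map_mul, inv_mul_cancel₀ hx0,
      map_one]
  nlinarith [spectralNorm_nonneg (K := ℚ_[p]) x⁻¹]

variable [FiniteDimensional ℚ_[p] K]

theorem exists_monic_of_spectralNorm_lt_one {x : K} (hx : spectralNorm ℚ_[p] K x < 1) :
    ∃ Q : ℤ_[p][X], Q.Monic ∧ Q.natDegree ≤ Module.finrank ℚ_[p] K ∧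
      (∀ i < Q.natDegree, Q.coeff i ∈ Ideal.span {(p : ℤ_[p])}) ∧ aeval x Q = 0 := by
  obtain ⟨Q, hQ, hQm⟩ := exists_monic_map_eq_minpoly_of_spectralNorm_le_one hx.le
  have hdeg : Q.natDegree = (minpoly ℚ_[p] x).natDegree := by
    rw [← hQ, hQm.natDegree_map]
  refine ⟨Q, hQm, hdeg ▸ minpoly.natDegree_le x, fun i hi => ?_,
    by rw [← aeval_map_algebraMap ℚ_[p], hQ, minpoly.aeval]⟩
  have hnorm : ‖Q.coeff i‖ < 1 := by
    have := norm_coeff_lt_one_of_spectralValue_lt_one hx (hdeg ▸ hi)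
    rwa [← hQ, coeff_map] at this
  rw [Ideal.mem_span_singleton]
  exact (PadicInt.norm_lt_one_iff_dvd _).1 hnorm

theorem exists_monic_aeval_inv_eq_zero_of_not_isIntegral {x : K} (hx : ¬ IsIntegral ℤ_[p] x) :
    ∃ Q : ℤ_[p][X], Q.Monic ∧ Q.natDegree ≤ Module.finrank ℚ_[p] K ∧
      (∀ i < Q.natDegree, Q.coeff i ∈ Ideal.span {(p : ℤ_[p])}) ∧ aeval x⁻¹ Q = 0 :=
  exists_monic_of_spectralNorm_lt_one (spectralNorm_inv_lt_one_of_not_isIntegral hx)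

end

theorem pow_eq_neg_sum_of_aeval_inv_eq_zero {R L : Type*} [CommRing R] [Field L] [Algebra R L]
    {P : R[X]} (hP : P.Monic) {x : L} (hx : x ≠ 0) (h : aeval x⁻¹ P = 0) (ℓ : ℕ) :
    x ^ ℓ = -∑ i ∈ Finset.range P.natDegree, P.coeff i • x ^ (ℓ + (P.natDegree - i)) := by
  rw [eq_neg_iff_add_eq_zero]
  have hscaled := congrArg (x ^ (ℓ + P.natDegree) * ·) h
  simp only [mul_zero] at hscaled
  rw [← hscaled, aeval_eq_sum_range, Finset.sum_range_succ, hP.coeff_natDegree, one_smul,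
    mul_add, Finset.mul_sum, add_comm _ (x ^ (ℓ + P.natDegree) * _)]
  have hcancel : ∀ j k, x ^ (j + k) * x⁻¹ ^ k = x ^ j := fun j k => by
    rw [pow_add, inv_pow, mul_assoc, mul_inv_cancel₀ (pow_ne_zero _ hx), mul_one]
  congr 1
  · exact (hcancel ℓ _).symm
  · refine Finset.sum_congr rfl fun i hi => ?_
    rw [mul_smul_comm, show ℓ + P.natDegree = ℓ + (P.natDegree - i) + i by
      have := Finset.mem_range.1 hi; omega, hcancel]

theorem smul_pow_add_smul_pow_eq_sum {R L : Type*} [CommRing R] [Field L] [Algebra R L]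
    {P : R[X]} (hP : P.Monic) {x y : L} (hx : x ≠ 0) (hy : y ≠ 0) (hPx : aeval x⁻¹ P = 0)
    (hPy : aeval y⁻¹ P = 0) (b₁ b₂ : R) (ℓ : ℕ) :
    b₁ • x ^ ℓ + b₂ • y ^ ℓ = ∑ i ∈ Finset.range P.natDegree,
      (-P.coeff i) • (b₁ • x ^ (ℓ + (P.natDegree - i)) + b₂ • y ^ (ℓ + (P.natDegree - i))) := by
  rw [pow_eq_neg_sum_of_aeval_inv_eq_zero hP hx hPx, pow_eq_neg_sum_of_aeval_inv_eq_zero hP hy hPy]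
  simp only [smul_neg, Finset.smul_sum, smul_add, neg_smul, Finset.sum_add_distrib,
    ← Finset.sum_neg_distrib, smul_comm b₁, smul_comm b₂]

/-- With `K` a finite extension of `ℚ_p` of degree `d`, `α ∈ K` not integral over
`ℤ_p`, `β = σ(α)` a Galois conjugate, `b₁, b₂ ∈ ℤ_p`, and `M ℓ` the
`ℤ_p`-submodule of `K` spanned by `b₁ α^{ℓ+1} + b₂ β^{ℓ+1}, …, b₁ α^{ℓ+d} + b₂ β^{ℓ+d}`,
one has `b₁ α^ℓ + b₂ β^ℓ ∈ p · M ℓ` for every `ℓ ≥ 0`. -/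
theorem module_step (p : ℕ) [Fact p.Prime]
    (K : Type*) [Field K] [Algebra ℚ_[p] K] [FiniteDimensional ℚ_[p] K]
    [Algebra ℤ_[p] K] [IsScalarTower ℤ_[p] ℚ_[p] K]
    (d : ℕ) (hd : d = Module.finrank ℚ_[p] K)
    (α : K) (hα : ¬ IsIntegral ℤ_[p] α) (σ : K ≃ₐ[ℚ_[p]] K) (β : K) (hβ : β = σ α)
    (b₁ b₂ : ℤ_[p])
    (M : ℕ → Submodule ℤ_[p] K)
    (hM : ∀ ℓ, M ℓ = Submodule.span ℤ_[p]
      ((fun i : ℕ => b₁ • α ^ (ℓ + i) + b₂ • β ^ (ℓ + i)) '' (Set.Icc 1 d))) :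
    ∀ ℓ : ℕ, b₁ • α ^ ℓ + b₂ • β ^ ℓ ∈ Ideal.span {(p : ℤ_[p])} • M ℓ := by
  intro ℓ
  obtain ⟨P, hPm, hPd, hcoeff, hPα⟩ := exists_monic_aeval_inv_eq_zero_of_not_isIntegral hα
  have hα0 : α ≠ 0 := by rintro rfl; exact hα isIntegral_zero
  have hPβ : aeval β⁻¹ P = 0 := by
    have hσ : aeval (σ α⁻¹) P = σ (aeval α⁻¹ P) :=
      aeval_algHom_apply ((σ : K →ₐ[ℚ_[p]] K).restrictScalars ℤ_[p]) α⁻¹ P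
    rw [hβ, ← map_inv₀, hσ, hPα, map_zero]
  rw [smul_pow_add_smul_pow_eq_sum hPm hα0 (hβ ▸ (map_ne_zero σ).2 hα0) hPα hPβ, hM]
  refine Submodule.sum_mem _ fun i hi => ?_
  have hi : i < P.natDegree := Finset.mem_range.1 hi
  exact Submodule.smul_mem_smul (neg_mem (hcoeff i hi))
    (Submodule.subset_span ⟨P.natDegree - i, ⟨by omega, by omega⟩, rfl⟩)
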